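/- If there exists a locally free β-twisted sheaf of rank n on M, then the class of β in H^2(M, O*) is torsion of order dividing n. -/

import Mathlib

namespace Matrix

variable {m R : Type*} [Fintype m] [DecidableEq m] [CommRing R]

theorem det_mul_det_mul_det_of_mul_mul_eq_smul_one {A B C : Matrix m m R} {c : R}
    (h : A * B * C = c • 1) : A.det * B.det * C.det = c ^ Fintype.card m := by
  simpa only [det_mul, det_smul, det_one, mul_one] using congrArg det h

end Matrix

theorem twisted_cocycle_torsion_of_rank_n_general
    {ι R : Type*} [CommRing R] (n : ℕ)
    (A : ι → ι → Matrix (Fin n) (Fin n) R) (β : ι → ι → ι → Rˣ)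
    (hA : ∀ i j k, A k i * A j k * A i j = (β i j k : R) • (1 : Matrix (Fin n) (Fin n) R)) :
    ∃ t : ι → ι → Rˣ, ∀ i j k, (β i j k) ^ n = t i j * t j k * t k i := by
  have hdet : ∀ i j k, (A k i).det * (A j k).det * (A i j).det = (β i j k : R) ^ n :=
    fun i j k => by
      simpa only [Fintype.card_fin] using
        Matrix.det_mul_det_mul_det_of_mul_mul_eq_smul_one (hA i j k)
  -- `det (A i j)` divides the unit `β i j i ^ n`.
  have hunit : ∀ i j, IsUnit (A i j).det := fun i j =>
    isUnit_of_mul_isUnit_right (hdet i j i ▸ (β i j i).isUnit.pow n)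
  refine ⟨fun i j => (hunit i j).unit, fun i j k => Units.ext ?_⟩
  simp only [Units.val_pow_eq_pow_val, Units.val_mul, IsUnit.unit_spec, ← hdet i j k]
  ring

/-- If there exists a locally free `β`-twisted sheaf of rank `n` on
`M`, then the class of `β` in `H²(M, O*)` is torsion of order dividing `n`.
Formalized at the level of Čech cochains over the ring `R` of functions: the
gluing isomorphisms of the rank-`n` locally free twisted sheaf are invertible
`n × n` transition matrices `A i j` satisfying the twisted cocycle condition
`A k i * A j k * A i j = β i j k • 1`.  Taking determinants, `δ(det A) = βⁿ`,
so `βⁿ` is a Čech coboundary, i.e. `[β]ⁿ = 1` in Čech cohomology. -/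
theorem twisted_cocycle_torsion_of_rank_n
    {ι R : Type*} [CommRing R] (n : ℕ)
    (A : ι → ι → Matrix (Fin n) (Fin n) R) (β : ι → ι → ι → Rˣ)
    (hinv : ∀ i j, IsUnit (A i j).det)
    (hA : ∀ i j k, A k i * A j k * A i j = (β i j k : R) • (1 : Matrix (Fin n) (Fin n) R)) :
    ∃ t : ι → ι → Rˣ, ∀ i j k, (β i j k) ^ n = t i j * t j k * t k i :=
  twisted_cocycle_torsion_of_rank_n_general n A β hA
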